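/- Let K be a field, let (A, ∇, 1) be an associative unital K-algebra with multiplication map ∇ : A ⊗ A → A, let c : A ⊗ A → A ⊗ A be a K-linear map with c(1 ⊗ a) = a ⊗ 1 and c(a ⊗ 1) = 1 ⊗ a for all a ∈ A, and let Δ : A → A ⊗ A be a K-linear map satisfying Δ ∘ ∇ = (∇ ⊗ ∇) ∘ (id_A ⊗ c ⊗ id_A) ∘ (Δ ⊗ Δ). Let P := {a ∈ A : Δ(a) = a ⊗ 1 + 1 ⊗ a} and suppose that c maps the image of P ⊗ P in A ⊗ A into itself and that (c + id)(c − λ·id)(z) = 0 for some λ ∈ K and all z in the image of P ⊗ P. Then ∇((c − λ·id)(z)) ∈ P for every z in the image of P ⊗ P in A ⊗ A. -/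
import Mathlib


open TensorProduct

noncomputable section

variable {K : Type*} [Field K] {A : Type*} [Ring A] [Algebra K A]

/-- The endomorphism `id_A ⊗ c ⊗ id_A` of `(A ⊗ A) ⊗ (A ⊗ A)`, acting by `c` on the two
middle tensor factors. -/
def mid4 (c : A ⊗[K] A →ₗ[K] A ⊗[K] A) :
    (A ⊗[K] A) ⊗[K] (A ⊗[K] A) →ₗ[K] (A ⊗[K] A) ⊗[K] (A ⊗[K] A) :=
  let e : ((A ⊗[K] A) ⊗[K] (A ⊗[K] A)) ≃ₗ[K] (A ⊗[K] ((A ⊗[K] A) ⊗[K] A)) :=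
    (TensorProduct.assoc K A A (A ⊗[K] A)).trans
      (TensorProduct.congr (LinearEquiv.refl K A) (TensorProduct.assoc K A A A).symm)
  e.symm.toLinearMap ∘ₗ LinearMap.lTensor A (LinearMap.rTensor A c) ∘ₗ e.toLinearMap

/-- The set of primitive elements of `A` relative to `Δ`. -/
def primSet (Δ : A →ₗ[K] A ⊗[K] A) : Set A :=
  {a : A | Δ a = a ⊗ₜ[K] (1 : A) + (1 : A) ⊗ₜ[K] a}

/-- The image of `P ⊗ P` in `A ⊗ A`, where `P` is the set of primitives: the span of the
elements `p ⊗ q` with `p, q` primitive. -/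
def primTensorSq (Δ : A →ₗ[K] A ⊗[K] A) : Submodule K (A ⊗[K] A) :=
  Submodule.span K {z | ∃ p ∈ primSet Δ, ∃ q ∈ primSet Δ, z = p ⊗ₜ[K] q}

lemma mid4_tmul (c : A ⊗[K] A →ₗ[K] A ⊗[K] A) (a b d e' : A) :
    mid4 c ((a ⊗ₜ[K] b) ⊗ₜ[K] (d ⊗ₜ[K] e')) =
      ((TensorProduct.assoc K A A (A ⊗[K] A)).trans
      (TensorProduct.congr (LinearEquiv.refl K A) (TensorProduct.assoc K A A A).symm)).symm
        (a ⊗ₜ[K] ((c (b ⊗ₜ[K] d)) ⊗ₜ[K] e')) := by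
  simp [mid4]

lemma mulmul_esymm (a e' : A) (w : A ⊗[K] A) :
    TensorProduct.map (LinearMap.mul' K A) (LinearMap.mul' K A)
      (((TensorProduct.assoc K A A (A ⊗[K] A)).trans
      (TensorProduct.congr (LinearEquiv.refl K A) (TensorProduct.assoc K A A A).symm)).symm
        (a ⊗ₜ[K] (w ⊗ₜ[K] e'))) =
      TensorProduct.map (LinearMap.mulLeft K a) (LinearMap.mulRight K e') w := by
  induction w using TensorProduct.induction_on with
  | zero => simp only [zero_tmul, tmul_zero, LinearEquiv.map_zero, LinearMap.map_zero]
  | tmul x y => simp [TensorProduct.assoc_symm_tmul]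
  | add u v hu hv =>
      rw [add_tmul, tmul_add, LinearEquiv.map_add, LinearMap.map_add, hu, hv, LinearMap.map_add]

lemma delta_mul_of_prim
    (c : A ⊗[K] A →ₗ[K] A ⊗[K] A)
    (hc1 : ∀ a : A, c ((1 : A) ⊗ₜ[K] a) = a ⊗ₜ[K] (1 : A))
    (hc2 : ∀ a : A, c (a ⊗ₜ[K] (1 : A)) = (1 : A) ⊗ₜ[K] a)
    (Δ : A →ₗ[K] A ⊗[K] A)
    (hcompat : Δ ∘ₗ LinearMap.mul' K A =
      TensorProduct.map (LinearMap.mul' K A) (LinearMap.mul' K A) ∘ₗ mid4 c ∘ₗ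
        TensorProduct.map Δ Δ) :
    ∀ z ∈ primTensorSq Δ,
      Δ (LinearMap.mul' K A z) =
        (LinearMap.mul' K A z) ⊗ₜ[K] (1 : A) + (1 : A) ⊗ₜ[K] (LinearMap.mul' K A z) + z + c z := by
  intro z hz
  induction hz using Submodule.span_induction with
  | mem z hzmem =>
      obtain ⟨p, hp, q, hq, rfl⟩ := hzmem
      have h := LinearMap.congr_fun hcompat (p ⊗ₜ[K] q)
      simp only [LinearMap.comp_apply, map_tmul, LinearMap.mul'_apply] at h
      rw [hp, hq, tmul_add, add_tmul, add_tmul, LinearMap.map_add, LinearMap.map_add,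
        LinearMap.map_add, LinearMap.map_add, LinearMap.map_add, LinearMap.map_add,
        mid4_tmul, mid4_tmul, mid4_tmul, mid4_tmul,
        hc1, hc1, hc2, mulmul_esymm, mulmul_esymm, mulmul_esymm, mulmul_esymm] at h
      simp only [map_tmul, LinearMap.mulLeft_apply, LinearMap.mulRight_apply,
        LinearMap.mulLeft_one, LinearMap.mulRight_one, LinearMap.id_coe, id_eq,
        TensorProduct.map_id, one_mul, mul_one, LinearMap.mul'_apply] at h
      simp only [LinearMap.mul'_apply]; rw [h]; abel
  | zero => simp
  | add u v hu hv ihu ihv =>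
      rw [LinearMap.map_add, LinearMap.map_add, LinearMap.map_add, ihu, ihv,
        add_tmul, tmul_add]
      abel
  | smul a u hu ihu =>
      rw [LinearMap.map_smul, LinearMap.map_smul, LinearMap.map_smul, ihu]
      rw [smul_add, smul_add, smul_add, tmul_smul, smul_tmul']

/-- **Proposition.**  Let `c : A ⊗ A → A ⊗ A` be unital, let `Δ` be multiplicative with
respect to the `c`-twisted multiplication, suppose `c` preserves the image of `P ⊗ P`
(`P` the primitives) and is of Hecke type of mark `lam` on it.  Then
`∇((c - lam•id) z)` is a primitive element for every `z` in the image of `P ⊗ P`. -/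
theorem mul_hecke_of_primitives_mem_primitives
    (c : A ⊗[K] A →ₗ[K] A ⊗[K] A)
    (hc1 : ∀ a : A, c ((1 : A) ⊗ₜ[K] a) = a ⊗ₜ[K] (1 : A))
    (hc2 : ∀ a : A, c (a ⊗ₜ[K] (1 : A)) = (1 : A) ⊗ₜ[K] a)
    (Δ : A →ₗ[K] A ⊗[K] A)
    (hcompat : Δ ∘ₗ LinearMap.mul' K A =
      TensorProduct.map (LinearMap.mul' K A) (LinearMap.mul' K A) ∘ₗ mid4 c ∘ₗ
        TensorProduct.map Δ Δ)
    (hcP : ∀ z ∈ primTensorSq Δ, c z ∈ primTensorSq Δ)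
    (lam : K)
    (hHecke : ∀ z ∈ primTensorSq Δ,
      ((c + LinearMap.id) ∘ₗ (c - lam • (LinearMap.id : A ⊗[K] A →ₗ[K] A ⊗[K] A))) z = 0) :
    ∀ z ∈ primTensorSq Δ,
      LinearMap.mul' K A ((c - lam • (LinearMap.id : A ⊗[K] A →ₗ[K] A ⊗[K] A)) z) ∈ primSet Δ := by
  intro z hz
  set w := (c - lam • (LinearMap.id : A ⊗[K] A →ₗ[K] A ⊗[K] A)) z with hw
  have hwc : w = c z - lam • z := by
    simp [hw, LinearMap.sub_apply, LinearMap.smul_apply]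
  have hwP : w ∈ primTensorSq Δ := by
    rw [hwc]
    exact Submodule.sub_mem _ (hcP z hz) (Submodule.smul_mem _ _ hz)
  have h0 : c w + w = 0 := by
    have h := hHecke z hz
    simpa [LinearMap.comp_apply, LinearMap.add_apply, LinearMap.id_apply, ← hw] using h
  have hd := delta_mul_of_prim c hc1 hc2 Δ hcompat w hwP
  show Δ (LinearMap.mul' K A w) =
    (LinearMap.mul' K A w) ⊗ₜ[K] (1 : A) + (1 : A) ⊗ₜ[K] (LinearMap.mul' K A w)
  rw [hd, add_assoc, add_comm w (c w), h0, add_zero]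

end
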